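/- Let D ≥ 1 be an integer, 0 < L ≤ D, and for δ ∈ {0,1}^D let f_δ(x) = 1_{[0,1]^d}(x)(1 + Σ_{j=1}^D δ_j h_j(x₁)), and let P_δ denote the probability measure on ℝ^d with density f_δ and P₀ the uniform distribution on [0,1]^d. Then for every n ≥ 1 and every δ = (δ₁,…,δ_D) ∈ {0,1}^D, K(P_δ^{⊗n} | P₀^{⊗n}) = n (Σ_{j=1}^D δ_j) ∫_0^{1/D} (1 + h(x)) log(1 + h(x)) dx ≤ n L² / D². -/

import Mathlib

open MeasureTheory Real
open scoped ENNReal BigOperators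

noncomputable section

/-- `g(y) = 1_{[0,1/2]}(y) − 1_{(1/2,1]}(y)`. -/
def gstep (y : ℝ) : ℝ :=
  Set.indicator (Set.Icc (0 : ℝ) (1 / 2)) (fun _ => 1) y
    - Set.indicator (Set.Ioc (1 / 2 : ℝ) 1) (fun _ => 1) y

/-- `h(y) = (L/D) g(Dy)`. -/
def hstep (L : ℝ) (D : ℕ) (y : ℝ) : ℝ := (L / D) * gstep (D * y)

/-- The perturbed density `f_δ(x) = 1_{[0,1]^d}(x) (1 + ∑_{j=1}^D δ_j h_j(x₁))`,
where `h_j(y) = h(y − (j−1)/D)` (here `j : Fin D` represents `j+1 ∈ {1,…,D}`). -/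
def fdel (L : ℝ) (D d : ℕ) (hd : 0 < d) (δ : Fin D → Bool) (x : Fin d → ℝ) : ℝ :=
  Set.indicator (Set.Icc (0 : Fin d → ℝ) 1)
    (fun x => 1 + ∑ j : Fin D,
      (if δ j then (1 : ℝ) else 0) * hstep L D (x ⟨0, hd⟩ - (j : ℕ) / D)) x

/-- The probability measure on `ℝ^d` with density `f_δ` w.r.t. Lebesgue measure. -/
def Pdel (L : ℝ) (D d : ℕ) (hd : 0 < d) (δ : Fin D → Bool) : Measure (Fin d → ℝ) :=
  volume.withDensity fun x => ENNReal.ofReal (fdel L D d hd δ x)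

open Classical in
/-- Kullback-Leibler divergence between two measures:
`K(P|Q) = ∫ log (dP/dQ) dP` if `P ≪ Q`, and `+∞` otherwise. -/
def KLmeasure {X : Type*} [MeasurableSpace X] (P Q : Measure X) : ℝ≥0∞ :=
  if P ≪ Q then ENNReal.ofReal (∫ x, Real.log (P.rnDeriv Q x).toReal ∂P) else ∞

section AuxLemmas
variable {L : ℝ} {D : ℕ}

lemma measurable_gstep : Measurable gstep := by
  unfold gstep
  exact ((measurable_const.indicator measurableSet_Icc).sub
    (measurable_const.indicator measurableSet_Ioc))

lemma measurable_hstep {L : ℝ} {D : ℕ} : Measurable (hstep L D) :=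
  measurable_const.mul (measurable_gstep.comp (measurable_const.mul measurable_id))

lemma gstep_of_mem_left {y : ℝ} (h : y ∈ Set.Icc (0:ℝ) (1/2)) : gstep y = 1 := by
  have h2 : y ∉ Set.Ioc (1/2 : ℝ) 1 := fun hc => absurd h.2 (not_le.2 hc.1)
  unfold gstep
  rw [Set.indicator_of_mem h, Set.indicator_of_notMem h2]
  norm_num

lemma gstep_of_mem_right {y : ℝ} (h : y ∈ Set.Ioc (1/2 : ℝ) 1) : gstep y = -1 := by
  have h2 : y ∉ Set.Icc (0:ℝ) (1/2) := fun hc => absurd hc.2 (not_le.2 h.1)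
  unfold gstep
  rw [Set.indicator_of_mem h, Set.indicator_of_notMem h2]
  norm_num

lemma gstep_of_out {y : ℝ} (h : y < 0 ∨ 1 < y) : gstep y = 0 := by
  have h1 : y ∉ Set.Icc (0:ℝ) (1/2) := by
    rcases h with h | h
    · exact fun hc => absurd hc.1 (not_le.2 h)
    · exact fun hc => absurd hc.2 (by nlinarith)
  have h2 : y ∉ Set.Ioc (1/2 : ℝ) 1 := by
    rcases h with h | h
    · exact fun hc => absurd hc.1 (by nlinarith)
    · exact fun hc => absurd hc.2 (not_le.2 h)
  unfold gstep
  rw [Set.indicator_of_notMem h1, Set.indicator_of_notMem h2]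
  norm_num

lemma abs_gstep_le (y : ℝ) : |gstep y| ≤ 1 := by
  by_cases h1 : y ∈ Set.Icc (0:ℝ) (1/2)
  · rw [gstep_of_mem_left h1]; norm_num
  by_cases h2 : y ∈ Set.Ioc (1/2:ℝ) 1
  · rw [gstep_of_mem_right h2]; norm_num
  have : gstep y = 0 := by
    unfold gstep
    rw [Set.indicator_of_notMem h1, Set.indicator_of_notMem h2]; norm_num
  rw [this]; norm_num

lemma gstep_neg_mem {y : ℝ} (h : gstep y < 0) : y ∈ Set.Ioc (1/2 : ℝ) 1 := by
  by_contra hc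
  rcases le_or_gt 0 y with h0 | h0
  · rcases le_or_gt y (1/2) with h12 | h12
    · rw [gstep_of_mem_left ⟨h0, h12⟩] at h; norm_num at h
    · rcases le_or_gt y 1 with hy1 | hy1
      · exact hc ⟨h12, hy1⟩
      · rw [gstep_of_out (Or.inr hy1)] at h; norm_num at h
  · rw [gstep_of_out (Or.inl h0)] at h; norm_num at h

variable {L : ℝ} {D : ℕ}

lemma hstep_of_out (hD : 0 < D) {y : ℝ} (hy : y < 0 ∨ 1/D < y) : hstep L D y = 0 := by
  have hD' : (0:ℝ) < D := Nat.cast_pos.2 hD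
  have : gstep (D * y) = 0 := by
    apply gstep_of_out
    rcases hy with h | h
    · exact Or.inl (by nlinarith)
    · right; rw [div_lt_iff₀ hD'] at h; nlinarith
  simp [hstep, this]

lemma abs_hstep_le (hL : 0 ≤ L) (y : ℝ) : |hstep L D y| ≤ L / D := by
  rcases Nat.eq_zero_or_pos D with h | h
  · simp [hstep, h]
  have hD' : (0:ℝ) < D := Nat.cast_pos.2 h
  have := abs_gstep_le (D * y)
  rw [hstep, abs_mul, abs_of_nonneg (div_nonneg hL hD'.le)]
  nlinarith [div_nonneg hL hD'.le]

lemma hstep_pos_half (hD : 0 < D) {t : ℝ} (ht : t ∈ Set.Icc (0:ℝ) (1/(2*D))) :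
    hstep L D t = L / D := by
  have hD' : (0:ℝ) < D := Nat.cast_pos.2 hD
  have : gstep (D * t) = 1 := by
    apply gstep_of_mem_left
    constructor
    · nlinarith [ht.1]
    · have := ht.2; rw [le_div_iff₀ (by positivity)] at this; nlinarith
  simp [hstep, this]

lemma hstep_neg_half (hD : 0 < D) {t : ℝ} (ht : t ∈ Set.Ioc (1/(2*(D:ℝ))) (1/(D:ℝ))) :
    hstep L D t = -(L / D) := by
  have hD' : (0:ℝ) < D := Nat.cast_pos.2 hD
  have : gstep (D * t) = -1 := by
    apply gstep_of_mem_right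
    constructor
    · have := ht.1; rw [div_lt_iff₀ (by positivity)] at this; nlinarith
    · have := ht.2; rw [le_div_iff₀ hD'] at this; nlinarith
  simp [hstep, this]

lemma integral_step (hD : 0 < D) (ψ : ℝ → ℝ) (c : ℝ) :
    ∫ t in (0:ℝ)..(1/(D:ℝ)), ψ (1 + c * hstep L D t)
      = (1/(2*(D:ℝ))) * (ψ (1 + c * (L/D)) + ψ (1 - c * (L/D))) := by
  have hD' : (0:ℝ) < D := Nat.cast_pos.2 hD
  set b : ℝ := 1/(2*D) with hb
  set e : ℝ := 1/(D:ℝ) with he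
  have hb0 : 0 < b := by positivity
  have hbe : b < e := by rw [hb, he]; rw [div_lt_div_iff₀ (by positivity) hD']; nlinarith
  have heb : e - b = b := by rw [hb, he]; field_simp; ring
  have h1 : Set.EqOn (fun t => ψ (1 + c * hstep L D t)) (fun _ => ψ (1 + c * (L/D)))
      (Set.uIcc (0:ℝ) b) := by
    intro t ht
    rw [Set.uIcc_of_le hb0.le] at ht
    simp only []
    rw [hstep_pos_half hD ht]
  have h2 : Set.EqOn (fun t => ψ (1 + c * hstep L D t)) (fun _ => ψ (1 - c * (L/D)))
      (Set.Ioc b e) := by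
    intro t ht
    simp only []
    rw [hstep_neg_half hD ht]
    ring_nf
  have int1 : ∫ t in (0:ℝ)..b, ψ (1 + c * hstep L D t) = b * ψ (1 + c * (L/D)) := by
    rw [intervalIntegral.integral_congr h1, intervalIntegral.integral_const]
    simp [smul_eq_mul]
  have int2 : ∫ t in b..e, ψ (1 + c * hstep L D t) = b * ψ (1 - c * (L/D)) := by
    rw [intervalIntegral.integral_of_le hbe.le,
      MeasureTheory.setIntegral_congr_fun measurableSet_Ioc h2,
      MeasureTheory.setIntegral_const, Real.volume_real_Ioc_of_le hbe.le, heb, smul_eq_mul]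
  have ii1 : IntervalIntegrable (fun t => ψ (1 + c * hstep L D t)) volume 0 b := by
    rw [intervalIntegrable_iff, Set.uIoc_of_le hb0.le]
    refine (MeasureTheory.integrableOn_const (C := ψ (1 + c * (L/D)))
      measure_Ioc_lt_top.ne).congr_fun ?_
      measurableSet_Ioc
    intro t ht
    have : t ∈ Set.uIcc (0:ℝ) b := by
      rw [Set.uIcc_of_le hb0.le]; exact Set.Ioc_subset_Icc_self ht
    exact (h1 this).symm
  have ii2 : IntervalIntegrable (fun t => ψ (1 + c * hstep L D t)) volume b e := by
    rw [intervalIntegrable_iff, Set.uIoc_of_le hbe.le]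
    refine (MeasureTheory.integrableOn_const (C := ψ (1 - c * (L/D)))
      measure_Ioc_lt_top.ne).congr_fun ?_
      measurableSet_Ioc
    intro t ht
    exact (h2 ht).symm
  have := intervalIntegral.integral_add_adjacent_intervals ii1 ii2
  rw [int1, int2] at this
  rw [← this]
  ring

def Fdel (L : ℝ) (D : ℕ) (δ : Fin D → Bool) (t : ℝ) : ℝ :=
  1 + ∑ j : Fin D, (if δ j then (1 : ℝ) else 0) * hstep L D (t - (j : ℕ) / D)

variable {δ : Fin D → Bool}

lemma measurable_Fdel : Measurable (Fdel L D δ) := by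
  unfold Fdel
  refine measurable_const.add (Finset.measurable_sum _ fun j _ => ?_)
  exact measurable_const.mul (measurable_hstep.comp ((measurable_id.sub measurable_const)))

lemma abs_ite_hstep_le (hL : 0 ≤ L) (b : Bool) (y : ℝ) :
    |(if b then (1:ℝ) else 0) * hstep L D y| ≤ L / D := by
  rw [abs_mul]
  have h1 : |(if b then (1:ℝ) else 0)| ≤ 1 := by cases b <;> norm_num
  have h2 := abs_hstep_le (D := D) hL y
  nlinarith [abs_nonneg (hstep L D y), abs_nonneg (if b then (1:ℝ) else 0)]

lemma abs_Fdel_le (hL : 0 ≤ L) (hD : 0 < D) (t : ℝ) : |Fdel L D δ t| ≤ 1 + L := by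
  have hD' : (D:ℝ) ≠ 0 := Nat.cast_ne_zero.2 hD.ne'
  have hsum : |∑ j : Fin D, (if δ j then (1:ℝ) else 0) * hstep L D (t - (j:ℕ)/D)| ≤ L := by
    calc |∑ j : Fin D, (if δ j then (1:ℝ) else 0) * hstep L D (t - (j:ℕ)/D)|
        ≤ ∑ j : Fin D, |(if δ j then (1:ℝ) else 0) * hstep L D (t - (j:ℕ)/D)| :=
          Finset.abs_sum_le_sum_abs _ _
      _ ≤ ∑ _j : Fin D, L / D := Finset.sum_le_sum fun j _ => abs_ite_hstep_le hL _ _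
      _ = L := by rw [Finset.sum_const, Finset.card_univ, Fintype.card_fin, nsmul_eq_mul,
            mul_div_cancel₀ _ hD']
  rw [Fdel]
  calc |1 + ∑ j : Fin D, (if δ j then (1:ℝ) else 0) * hstep L D (t - (j:ℕ)/D)|
      ≤ 1 + |∑ j : Fin D, (if δ j then (1:ℝ) else 0) * hstep L D (t - (j:ℕ)/D)| := by
        have := abs_add_le (1:ℝ) (∑ j : Fin D, (if δ j then (1:ℝ) else 0) * hstep L D (t - (j:ℕ)/D))
        simpa using this
    _ ≤ 1 + L := by linarith

lemma Fdel_nonneg (hL : 0 ≤ L) (hD : 0 < D) (hLD : L ≤ D) (t : ℝ) : 0 ≤ Fdel L D δ t := by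
  have hD' : (0:ℝ) < D := Nat.cast_pos.2 hD
  have hLD1 : L / D ≤ 1 := by rw [div_le_one hD']; exact hLD
  have key : ∀ j : Fin D, (D:ℝ) * (t - (j:ℕ)/D) = D*t - (j:ℕ) := by
    intro j; field_simp
  suffices h : -(L/D) ≤ ∑ j : Fin D, (if δ j then (1:ℝ) else 0) * hstep L D (t - (j:ℕ)/D) by
    rw [Fdel]; linarith
  by_cases hbad : ∃ j : Fin D, gstep ((D:ℝ) * (t - (j:ℕ)/D)) < 0
  · obtain ⟨j0, hj0⟩ := hbad
    have huniq : ∀ j : Fin D, j ≠ j0 → 0 ≤ gstep ((D:ℝ) * (t - (j:ℕ)/D)) := by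
      intro j hj
      by_contra hneg
      push_neg at hneg
      have m1 := gstep_neg_mem hneg
      have m0 := gstep_neg_mem hj0
      rw [key j] at m1
      rw [key j0] at m0
      have h1 : ((j:ℕ):ℝ) < ((j0:ℕ):ℝ) + 1 := by
        have := m1.1; have := m0.2; linarith
      have h2 : ((j0:ℕ):ℝ) < ((j:ℕ):ℝ) + 1 := by
        have := m0.1; have := m1.2; linarith
      have hn1 : (j:ℕ) < (j0:ℕ) + 1 := by exact_mod_cast h1
      have hn2 : (j0:ℕ) < (j:ℕ) + 1 := by exact_mod_cast h2
      exact hj (Fin.ext (by omega))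
    have hsplit := Finset.add_sum_erase Finset.univ
      (fun j : Fin D => (if δ j then (1:ℝ) else 0) * hstep L D (t - (j:ℕ)/D))
      (Finset.mem_univ j0)
    have hrest : 0 ≤ ∑ j ∈ Finset.univ.erase j0,
        (if δ j then (1:ℝ) else 0) * hstep L D (t - (j:ℕ)/D) := by
      refine Finset.sum_nonneg fun j hj => ?_
      have hjne : j ≠ j0 := (Finset.mem_erase.1 hj).1
      refine mul_nonneg (by positivity) ?_
      rw [hstep]
      exact mul_nonneg (by positivity) (huniq j hjne)
    have hj0' : -(L/D) ≤ (if δ j0 then (1:ℝ) else 0) * hstep L D (t - (j0:ℕ)/D) := by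
      have := abs_ite_hstep_le (D := D) hL (δ j0) (t - (j0:ℕ)/D)
      have := neg_abs_le ((if δ j0 then (1:ℝ) else 0) * hstep L D (t - (j0:ℕ)/D))
      linarith
    rw [← hsplit]
    linarith
  · push_neg at hbad
    have : 0 ≤ ∑ j : Fin D, (if δ j then (1:ℝ) else 0) * hstep L D (t - (j:ℕ)/D) := by
      refine Finset.sum_nonneg fun j _ => ?_
      refine mul_nonneg (by positivity) ?_
      rw [hstep]
      exact mul_nonneg (by positivity) (hbad j)
    have : (0:ℝ) ≤ L / D := by positivity
    linarith

lemma Fdel_piece (hD : 0 < D) (ψ : ℝ → ℝ) (j : Fin D) :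
    ∫ t in (((j:ℕ):ℝ)/D)..((((j:ℕ):ℝ)+1)/D), ψ (Fdel L D δ t)
      = ∫ t in (0:ℝ)..(1/(D:ℝ)), ψ (1 + (if δ j then (1:ℝ) else 0) * hstep L D t) := by
  have hD' : (0:ℝ) < D := Nat.cast_pos.2 hD
  have hshift := intervalIntegral.integral_comp_add_right (a := (0:ℝ)) (b := 1/(D:ℝ))
    (fun t => ψ (Fdel L D δ t)) (((j:ℕ):ℝ)/D)
  rw [zero_add] at hshift
  have hub : 1/(D:ℝ) + ((j:ℕ):ℝ)/D = (((j:ℕ):ℝ)+1)/D := by ring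
  rw [hub] at hshift
  rw [← hshift]
  symm
  apply intervalIntegral.integral_congr_ae
  have hsing : ∀ᵐ x : ℝ, x ∉ ({1/(D:ℝ)} : Set ℝ) :=
    measure_eq_zero_iff_ae_notMem.mp (measure_singleton _)
  filter_upwards [hsing] with x hx hmem
  rw [Set.uIoc_of_le (by positivity : (0:ℝ) ≤ 1/(D:ℝ))] at hmem
  have hx0 : 0 < x := hmem.1
  have hx1 : x < 1/(D:ℝ) := lt_of_le_of_ne hmem.2 (by simpa using hx)
  show ψ (1 + (if δ j then (1:ℝ) else 0) * hstep L D x) = ψ (Fdel L D δ (x + ((j:ℕ):ℝ)/D))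
  have hsum : ∑ k : Fin D, (if δ k then (1:ℝ) else 0) * hstep L D (x + ((j:ℕ):ℝ)/D - ((k:ℕ):ℝ)/D)
      = (if δ j then (1:ℝ) else 0) * hstep L D x := by
    rw [Finset.sum_eq_single_of_mem j (Finset.mem_univ j) ?side]
    · have harg : x + ((j:ℕ):ℝ)/D - ((j:ℕ):ℝ)/D = x := by ring
      rw [harg]
    case side =>
      intro k _ hk
      have hkj : (k:ℕ) ≠ (j:ℕ) := fun h => hk (Fin.ext h)
      rcases lt_or_gt_of_ne hkj with h | h
      · -- k < j : argument > 1/D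
        have hjk : ((k:ℕ):ℝ) + 1 ≤ ((j:ℕ):ℝ) := by exact_mod_cast h
        have e2 : 0 ≤ (((j:ℕ):ℝ) - (k:ℕ) - 1)/D := div_nonneg (by linarith) hD'.le
        have e1 : (((j:ℕ):ℝ))/D - ((k:ℕ):ℝ)/D - 1/D = (((j:ℕ):ℝ) - (k:ℕ) - 1)/D := by ring
        have harg : 1/(D:ℝ) < x + ((j:ℕ):ℝ)/D - ((k:ℕ):ℝ)/D := by linarith
        rw [hstep_of_out hD (Or.inr harg), mul_zero]
      · -- k > j : argument < 0
        have hjk : ((j:ℕ):ℝ) + 1 ≤ ((k:ℕ):ℝ) := by exact_mod_cast h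
        have e2 : (((j:ℕ):ℝ) - (k:ℕ) + 1)/D ≤ 0 := div_nonpos_of_nonpos_of_nonneg (by linarith) hD'.le
        have e1 : (((j:ℕ):ℝ))/D - ((k:ℕ):ℝ)/D + 1/D = (((j:ℕ):ℝ) - (k:ℕ) + 1)/D := by ring
        have harg : x + ((j:ℕ):ℝ)/D - ((k:ℕ):ℝ)/D < 0 := by linarith
        rw [hstep_of_out hD (Or.inl harg), mul_zero]
  rw [Fdel, hsum]

lemma Fdel_intervalIntegrable (hL : 0 ≤ L) (hD : 0 < D) (ψ : ℝ → ℝ) (hψ : Measurable ψ)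
    (C : ℝ) (hC : ∀ x, |x| ≤ 1 + L → |ψ x| ≤ C) (u v : ℝ) :
    IntervalIntegrable (fun t => ψ (Fdel L D δ t)) volume u v := by
  rw [intervalIntegrable_iff]
  refine MeasureTheory.Integrable.mono'
    (MeasureTheory.integrableOn_const (C := C) measure_Ioc_lt_top.ne)
    ((hψ.comp measurable_Fdel).aestronglyMeasurable.restrict)
    (MeasureTheory.ae_of_all _ fun t => ?_)
  exact hC _ (abs_Fdel_le hL hD t)

lemma Fdel_integral (hL : 0 ≤ L) (hD : 0 < D) (ψ : ℝ → ℝ) (hψ : Measurable ψ)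
    (C : ℝ) (hC : ∀ x, |x| ≤ 1 + L → |ψ x| ≤ C) :
    ∫ t in (0:ℝ)..1, ψ (Fdel L D δ t)
      = ∑ j : Fin D, (1/(2*(D:ℝ))) * (ψ (1 + (if δ j then (1:ℝ) else 0) * (L/D))
          + ψ (1 - (if δ j then (1:ℝ) else 0) * (L/D))) := by
  have hD' : (0:ℝ) < D := Nat.cast_pos.2 hD
  have hadj := intervalIntegral.sum_integral_adjacent_intervals
    (a := fun k : ℕ => (k:ℝ)/D) (μ := volume) (n := D)
    (f := fun t => ψ (Fdel L D δ t))
    (fun k _ => Fdel_intervalIntegrable hL hD ψ hψ C hC _ _)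
  simp only [Nat.cast_add, Nat.cast_one, Nat.cast_zero, zero_div] at hadj
  rw [div_self hD'.ne'] at hadj
  rw [← hadj, ← Fin.sum_univ_eq_sum_range
    (fun k : ℕ => ∫ t in ((k:ℝ)/D)..(((k:ℝ)+1)/D), ψ (Fdel L D δ t)) D]
  refine Finset.sum_congr rfl fun j _ => ?_
  rw [Fdel_piece hD ψ j, integral_step hD ψ _]

lemma abs_mul_log_le {M x : ℝ} (hM : 1 ≤ M) (hx : |x| ≤ M) :
    |x * Real.log x| ≤ M * |Real.log M| + 1 := by
  have hMlog : 0 ≤ M * |Real.log M| := by positivity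
  rcases le_or_gt |x| 1 with h1 | h1
  · rcases eq_or_ne x 0 with rfl | hx0
    · simp; linarith
    · have hkey := Real.abs_log_mul_self_lt (abs x) (abs_pos.2 hx0) h1
      have he : |x * Real.log x| = abs (Real.log (abs x) * (abs x)) := by
        rw [Real.log_abs, abs_mul, abs_mul, abs_abs, mul_comm]
      rw [he]; linarith
  · have hlx : |Real.log x| = Real.log (abs x) := by
      rw [← Real.log_abs x]; exact abs_of_nonneg (Real.log_nonneg h1.le)
    have hlog_le : Real.log (abs x) ≤ Real.log M := Real.log_le_log (by linarith) hx
    have habs : |x * Real.log x| = |x| * |Real.log x| := abs_mul _ _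
    have hlogM : Real.log M ≤ |Real.log M| := le_abs_self _
    rw [habs, hlx]
    nlinarith [Real.log_nonneg h1.le, abs_nonneg x]

section Multi

variable {d : ℕ} (hd : 0 < d)

lemma mem_box_iff (x : Fin d → ℝ) :
    x ∈ Set.Icc (0 : Fin d → ℝ) 1 ↔ ∀ i, x i ∈ Set.Icc (0:ℝ) 1 := by
  constructor
  · intro hx i; exact ⟨hx.1 i, hx.2 i⟩
  · intro hx; exact ⟨fun i => (hx i).1, fun i => (hx i).2⟩

lemma indicator_box_prod (w : ℝ → ℝ) (x : Fin d → ℝ) :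
    (Set.Icc (0 : Fin d → ℝ) 1).indicator (fun x => w (x ⟨0, hd⟩)) x
      = ∏ i : Fin d, (if i = (⟨0, hd⟩ : Fin d) then (Set.Icc (0:ℝ) 1).indicator w (x i)
          else (Set.Icc (0:ℝ) 1).indicator (fun _ => 1) (x i)) := by
  by_cases hx : x ∈ Set.Icc (0 : Fin d → ℝ) 1
  · rw [Set.indicator_of_mem hx]
    have hxi : ∀ i, x i ∈ Set.Icc (0:ℝ) 1 := (mem_box_iff x).1 hx
    have hcongr : ∀ i : Fin d,
        (if i = (⟨0, hd⟩ : Fin d) then (Set.Icc (0:ℝ) 1).indicator w (x i)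
          else (Set.Icc (0:ℝ) 1).indicator (fun _ => 1) (x i))
        = (if i = (⟨0, hd⟩ : Fin d) then w (x i) else 1) := by
      intro i
      by_cases hi : i = (⟨0, hd⟩ : Fin d) <;>
        simp [hi, Set.indicator_of_mem (hxi _)]
    rw [Finset.prod_congr rfl (fun i _ => hcongr i), Finset.prod_ite_eq' Finset.univ _
      (fun i => w (x i))]
    simp
  · obtain ⟨i, hi⟩ : ∃ i, x i ∉ Set.Icc (0:ℝ) 1 := by
      by_contra hall; push_neg at hall; exact hx ((mem_box_iff x).2 hall)
    rw [Set.indicator_of_notMem hx]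
    symm
    apply Finset.prod_eq_zero (Finset.mem_univ i)
    rcases eq_or_ne i (⟨0, hd⟩ : Fin d) with hi0 | hi0
    · subst hi0
      rw [if_pos rfl, Set.indicator_of_notMem hi]
    · rw [if_neg hi0, Set.indicator_of_notMem hi]

lemma integral_indicator_box (w : ℝ → ℝ) :
    ∫ x : Fin d → ℝ, (Set.Icc (0 : Fin d → ℝ) 1).indicator (fun x => w (x ⟨0, hd⟩)) x
      = ∫ t in (0:ℝ)..1, w t := by
  simp_rw [indicator_box_prod hd w]
  rw [MeasureTheory.integral_fintype_prod_volume_eq_prod (ι := Fin d)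
    (f := fun (i : Fin d) (t : ℝ) => if i = (⟨0, hd⟩ : Fin d) then (Set.Icc (0:ℝ) 1).indicator w t
      else (Set.Icc (0:ℝ) 1).indicator (fun _ => 1) t)]
  rw [Finset.prod_eq_single (⟨0, hd⟩ : Fin d)]
  · simp only [if_pos rfl, if_true]
    rw [MeasureTheory.integral_indicator measurableSet_Icc,
      MeasureTheory.integral_Icc_eq_integral_Ioc, ← intervalIntegral.integral_of_le zero_le_one]
  · intro i _ hi
    simp only [if_neg hi]
    rw [MeasureTheory.integral_indicator measurableSet_Icc, MeasureTheory.setIntegral_const]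
    simp [Real.volume_Icc]
  · intro h; exact absurd (Finset.mem_univ _) h

lemma volume_box : (volume : Measure (Fin d → ℝ)) (Set.Icc (0 : Fin d → ℝ) 1) = 1 := by
  have : (Set.Icc (0 : Fin d → ℝ) 1) = Set.pi Set.univ (fun _ => Set.Icc (0:ℝ) 1) := by
    rw [Set.pi_univ_Icc]; rfl
  rw [this, volume_pi_pi]
  simp [Real.volume_Icc]

lemma integrable_indicator_box (w : ℝ → ℝ) (hw : Measurable w) (C : ℝ) (hC : ∀ t, |w t| ≤ C) :
    MeasureTheory.Integrable
      ((Set.Icc (0 : Fin d → ℝ) 1).indicator (fun x => w (x ⟨0, hd⟩))) volume := by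
  rw [MeasureTheory.integrable_indicator_iff measurableSet_Icc]
  refine MeasureTheory.Integrable.mono'
    (MeasureTheory.integrableOn_const (C := C) ?_)
    ((hw.comp (measurable_pi_apply _)).aestronglyMeasurable.restrict)
    (MeasureTheory.ae_of_all _ fun x => hC _)
  rw [volume_box]
  exact ENNReal.one_ne_top

end Multi

section FdelProps

variable {d : ℕ} {δ : Fin D → Bool}

lemma fdel_eq (hd : 0 < d) (x : Fin d → ℝ) :
    fdel L D d hd δ x
      = (Set.Icc (0 : Fin d → ℝ) 1).indicator (fun x => Fdel L D δ (x ⟨0, hd⟩)) x := rfl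

lemma measurable_fdel (hd : 0 < d) : Measurable (fdel L D d hd δ) := by
  have h : fdel L D d hd δ
      = (Set.Icc (0 : Fin d → ℝ) 1).indicator (fun x => Fdel L D δ (x ⟨0, hd⟩)) :=
    funext (fdel_eq hd)
  rw [h]
  exact (measurable_Fdel.comp (measurable_pi_apply _)).indicator measurableSet_Icc

lemma fdel_nonneg (hd : 0 < d) (hL : 0 ≤ L) (hD : 0 < D) (hLD : L ≤ D) (x : Fin d → ℝ) :
    0 ≤ fdel L D d hd δ x := by
  rw [fdel_eq hd]
  exact Set.indicator_nonneg (fun y _ => Fdel_nonneg hL hD hLD _) x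

lemma integrable_fdel (hd : 0 < d) (hL : 0 ≤ L) (hD : 0 < D) :
    MeasureTheory.Integrable (fdel L D d hd δ) volume := by
  have h : fdel L D d hd δ
      = (Set.Icc (0 : Fin d → ℝ) 1).indicator (fun x => Fdel L D δ (x ⟨0, hd⟩)) :=
    funext (fdel_eq hd)
  rw [h]
  exact integrable_indicator_box hd (Fdel L D δ) measurable_Fdel (1 + L) (abs_Fdel_le hL hD)

lemma integral_fdel (hd : 0 < d) (hL : 0 ≤ L) (hD : 0 < D) :
    ∫ x : Fin d → ℝ, fdel L D d hd δ x = 1 := by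
  have hD' : (0:ℝ) < D := Nat.cast_pos.2 hD
  simp_rw [fdel_eq hd]
  rw [integral_indicator_box hd (Fdel L D δ),
    Fdel_integral hL hD (fun u => u) measurable_id (1 + L) (fun x h => h)]
  have : ∀ j : Fin D, (1/(2*(D:ℝ))) * ((1 + (if δ j then (1:ℝ) else 0) * (L/D))
      + (1 - (if δ j then (1:ℝ) else 0) * (L/D))) = 1/(D:ℝ) := by
    intro j
    have h2 : ((1 + (if δ j then (1:ℝ) else 0) * (L/(D:ℝ)))
        + (1 - (if δ j then (1:ℝ) else 0) * (L/D))) = 2 := by ring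
    rw [h2]
    field_simp
  rw [Finset.sum_congr rfl fun j _ => this j, Finset.sum_const, Finset.card_univ,
    Fintype.card_fin, nsmul_eq_mul, mul_one_div, div_self hD'.ne']

lemma fdel_mul_log_eq (hd : 0 < d) (x : Fin d → ℝ) :
    fdel L D d hd δ x * Real.log (fdel L D d hd δ x)
      = (Set.Icc (0 : Fin d → ℝ) 1).indicator
          (fun x => Fdel L D δ (x ⟨0, hd⟩) * Real.log (Fdel L D δ (x ⟨0, hd⟩))) x := by
  rw [fdel_eq hd]
  by_cases hx : x ∈ Set.Icc (0 : Fin d → ℝ) 1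
  · rw [Set.indicator_of_mem hx, Set.indicator_of_mem hx]
  · rw [Set.indicator_of_notMem hx, Set.indicator_of_notMem hx, zero_mul]

lemma integral_fdel_mul_log (hd : 0 < d) (hL : 0 ≤ L) (hD : 0 < D) :
    ∫ x : Fin d → ℝ, fdel L D d hd δ x * Real.log (fdel L D d hd δ x)
      = (∑ j, if δ j then (1:ℝ) else 0) * ((1/(2*(D:ℝ)))
          * ((1 + L/D) * Real.log (1 + L/D) + (1 - L/D) * Real.log (1 - L/D))) := by
  have hψm : Measurable (fun u : ℝ => u * Real.log u) :=
    measurable_id.mul Real.measurable_log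
  have hC : ∀ x : ℝ, |x| ≤ 1 + L → |x * Real.log x| ≤ (1+L) * |Real.log (1+L)| + 1 :=
    fun x hx => abs_mul_log_le (by linarith) hx
  simp_rw [fdel_mul_log_eq hd]
  rw [integral_indicator_box hd (fun t => Fdel L D δ t * Real.log (Fdel L D δ t)),
    Fdel_integral hL hD (fun u => u * Real.log u) hψm _ hC, Finset.sum_mul]
  refine Finset.sum_congr rfl fun j _ => ?_
  cases hδ : δ j with
  | true => simp only [hδ, if_true, one_mul]
  | false =>
      simp only [hδ, Bool.false_eq_true, if_false, zero_mul, mul_zero, mul_one, sub_zero,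
        add_zero, Real.log_one]

lemma interval_I (hD : 0 < D) :
    ∫ x in (0:ℝ)..(1/(D:ℝ)), (1 + hstep L D x) * Real.log (1 + hstep L D x)
      = (1/(2*(D:ℝ))) * ((1 + L/D) * Real.log (1 + L/D)
          + (1 - L/D) * Real.log (1 - L/D)) := by
  have h := integral_step (L := L) hD (fun u => u * Real.log u) 1
  simp only [one_mul] at h
  exact h

end FdelProps

section PdelProps

variable {d : ℕ} {δ : Fin D → Bool}

lemma Pdel_eq_withDensity (hd : 0 < d) :
    Pdel L D d hd δ = (volume.restrict (Set.Icc (0 : Fin d → ℝ) 1)).withDensity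
      (fun x => ENNReal.ofReal (fdel L D d hd δ x)) := by
  have h1 : (fun x : Fin d → ℝ => ENNReal.ofReal (fdel L D d hd δ x))
      = (Set.Icc (0 : Fin d → ℝ) 1).indicator
          (fun x => ENNReal.ofReal (Fdel L D δ (x ⟨0, hd⟩))) := by
    funext x
    rw [fdel_eq hd]
    by_cases hx : x ∈ Set.Icc (0 : Fin d → ℝ) 1
    · rw [Set.indicator_of_mem hx, Set.indicator_of_mem hx]
    · rw [Set.indicator_of_notMem hx, Set.indicator_of_notMem hx, ENNReal.ofReal_zero]
  rw [Pdel, h1, MeasureTheory.withDensity_indicator measurableSet_Icc]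
  apply MeasureTheory.withDensity_congr_ae
  filter_upwards [MeasureTheory.ae_restrict_mem measurableSet_Icc] with x hx
  rw [Set.indicator_of_mem hx]

lemma isProb_Pdel (hd : 0 < d) (hL : 0 ≤ L) (hD : 0 < D) (hLD : L ≤ D) :
    IsProbabilityMeasure (Pdel L D d hd δ) := by
  constructor
  rw [Pdel, MeasureTheory.withDensity_apply _ MeasurableSet.univ, Measure.restrict_univ,
    ← MeasureTheory.ofReal_integral_eq_lintegral_ofReal (integrable_fdel hd hL hD)
      (MeasureTheory.ae_of_all _ (fdel_nonneg hd hL hD hLD)),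
    integral_fdel hd hL hD, ENNReal.ofReal_one]

lemma Pdel_null_of_fdel_zero (hd : 0 < d) :
    Pdel L D d hd δ {x | fdel L D d hd δ x = 0} = 0 := by
  have hms : MeasurableSet {x | fdel L D d hd δ x = 0} :=
    (measurable_fdel hd) (measurableSet_singleton 0)
  rw [Pdel, MeasureTheory.withDensity_apply _ hms]
  have : ∀ᵐ x ∂(volume.restrict {x | fdel L D d hd δ x = 0}),
      ENNReal.ofReal (fdel L D d hd δ x) = 0 := by
    filter_upwards [MeasureTheory.ae_restrict_mem hms] with x hx
    rw [hx, ENNReal.ofReal_zero]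
  rw [MeasureTheory.lintegral_congr_ae this, MeasureTheory.lintegral_zero]

end PdelProps

section PiLemmas

lemma lintegral_pi_prod {E : Type*} [MeasurableSpace E] :
    ∀ (n : ℕ) (μ : Fin n → Measure E), (∀ i, SigmaFinite (μ i)) →
      ∀ (g : Fin n → E → ℝ≥0∞), (∀ i, Measurable (g i)) →
        ∫⁻ x : Fin n → E, ∏ i, g i (x i) ∂Measure.pi μ = ∏ i, ∫⁻ y, g i y ∂(μ i) := by
  intro n
  induction n with
  | zero =>
      intro μ hsf g hg
      haveI := hsf
      simp only [Finset.univ_eq_empty, Finset.prod_empty]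
      rw [MeasureTheory.lintegral_one, Measure.pi_univ]
      simp
  | succ n ih =>
      intro μ hsf g hg
      haveI := hsf
      have hcomp := ((measurePreserving_piFinSuccAbove μ 0).symm).lintegral_comp_emb
        (MeasurableEquiv.measurableEmbedding _) (fun x => ∏ i, g i (x i))
      rw [← hcomp]
      simp_rw [MeasurableEquiv.piFinSuccAbove_symm_apply, Fin.insertNthEquiv,
        Fin.prod_univ_succ, Fin.insertNth_zero, Equiv.coe_fn_mk]
      simp only [Fin.zero_succAbove, cast_eq, Function.comp_def, Fin.cons_zero, Fin.cons_succ]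
      rw [MeasureTheory.lintegral_prod_mul (hg 0).aemeasurable
        ((Finset.measurable_prod (f := fun (i : Fin n) (y : Fin n → E) => g i.succ (y i))
          Finset.univ
          (fun i _ => (hg i.succ).comp (measurable_pi_apply i))).aemeasurable)]
      rw [ih (fun i => μ i.succ) (fun i => inferInstance) (fun i => g i.succ)
        (fun i => hg i.succ)]

lemma pi_withDensity {n : ℕ} {E : Type*} [MeasurableSpace E] (ν : Measure E) [SigmaFinite ν]
    (g : E → ℝ≥0∞) (hg : Measurable g) (hsf : SigmaFinite (ν.withDensity g)) :
    Measure.pi (fun _ : Fin n => ν.withDensity g)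
      = (Measure.pi fun _ : Fin n => ν).withDensity (fun x => ∏ i, g (x i)) := by
  haveI := hsf
  refine Measure.pi_eq fun s hs => ?_
  rw [MeasureTheory.withDensity_apply _ (MeasurableSet.univ_pi hs),
    ← MeasureTheory.lintegral_indicator (MeasurableSet.univ_pi hs)
      (fun x => ∏ i, g (x i))]
  have hpt : ∀ x : Fin n → E,
      (Set.pi Set.univ s).indicator (fun x => ∏ i, g (x i)) x
        = ∏ i, (s i).indicator g (x i) := by
    intro x
    by_cases hx : x ∈ Set.pi Set.univ s
    · rw [Set.indicator_of_mem hx]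
      exact Finset.prod_congr rfl fun i _ =>
        (Set.indicator_of_mem (hx i (Set.mem_univ i)) g).symm
    · rw [Set.indicator_of_notMem hx]
      rw [Set.mem_univ_pi] at hx
      push_neg at hx
      obtain ⟨i, hi⟩ := hx
      exact (Finset.prod_eq_zero (Finset.mem_univ i) (Set.indicator_of_notMem hi g)).symm
  simp_rw [hpt]
  rw [lintegral_pi_prod n (fun _ => ν) (fun _ => inferInstance)
    (fun i => (s i).indicator g) (fun i => hg.indicator (hs i))]
  refine Finset.prod_congr rfl fun i _ => ?_
  rw [MeasureTheory.lintegral_indicator (hs i) g, ← MeasureTheory.withDensity_apply g (hs i)]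

lemma pi_map_eval {n : ℕ} {E : Type*} [MeasurableSpace E] (μ : Measure E)
    [IsProbabilityMeasure μ] (i : Fin n) :
    (Measure.pi fun _ : Fin n => μ).map (Function.eval i) = μ := by
  ext s hs
  rw [Measure.map_apply (measurable_pi_apply i) hs]
  have hpre : Function.eval i ⁻¹' s
      = Set.pi Set.univ (Function.update (fun _ : Fin n => (Set.univ : Set E)) i s) :=
    Set.eval_preimage
  rw [hpre, Measure.pi_pi]
  rw [Fintype.prod_eq_single i (fun j hj => by
    rw [Function.update_of_ne hj]; exact measure_univ)]
  rw [Function.update_self]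

end PiLemmas

end AuxLemmas

/-- The KL divergence between the `n`-fold products `P_δ^{⊗n}` and `P₀^{⊗n}` (with `P₀`
the uniform distribution on `[0,1]^d`) equals
`n (∑_j δ_j) ∫_0^{1/D} (1+h) log(1+h) dx` and is at most `n L²/D²`. -/
theorem KL_product_fdel
    (d D n : ℕ) (hd : 0 < d) (hD : 1 ≤ D) (hn : 1 ≤ n) (L : ℝ) (hL : 0 < L) (hLD : L ≤ D)
    (δ : Fin D → Bool) :
    KLmeasure (Measure.pi fun _ : Fin n => Pdel L D d hd δ)
        (Measure.pi fun _ : Fin n => volume.restrict (Set.Icc (0 : Fin d → ℝ) 1))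
      = ENNReal.ofReal ((n : ℝ) * (∑ j, if δ j then (1 : ℝ) else 0)
          * ∫ x in (0 : ℝ)..(1 / D), (1 + hstep L D x) * Real.log (1 + hstep L D x)) ∧
    KLmeasure (Measure.pi fun _ : Fin n => Pdel L D d hd δ)
        (Measure.pi fun _ : Fin n => volume.restrict (Set.Icc (0 : Fin d → ℝ) 1))
      ≤ ENNReal.ofReal ((n : ℝ) * L ^ 2 / D ^ 2) := by

  have hD0 : 0 < D := hD
  have hD' : (0:ℝ) < D := Nat.cast_pos.2 hD0
  set P : Measure (Fin d → ℝ) := Pdel L D d hd δ with hPdef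
  set Q : Measure (Fin d → ℝ) := volume.restrict (Set.Icc (0 : Fin d → ℝ) 1) with hQdef
  set fρ : (Fin d → ℝ) → ℝ≥0∞ := fun x => ENNReal.ofReal (fdel L D d hd δ x) with hfρ
  set G : (Fin n → Fin d → ℝ) → ℝ≥0∞ := fun x => ∏ i, fρ (x i) with hG
  haveI hprob : IsProbabilityMeasure P := isProb_Pdel hd hL.le hD0 hLD
  haveI hQfin : IsFiniteMeasure Q := by
    constructor
    rw [hQdef, Measure.restrict_apply_univ, volume_box]
    exact ENNReal.one_lt_top
  have hfρm : Measurable fρ := (measurable_fdel hd).ennreal_ofReal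
  have hGmeas : Measurable G := by
    exact Finset.measurable_prod (f := fun (i : Fin n) (x : Fin n → Fin d → ℝ) => fρ (x i))
      Finset.univ (fun i _ => hfρm.comp (measurable_pi_apply i))
  have key1 : P = Q.withDensity fρ := Pdel_eq_withDensity hd
  have hpiP : (Measure.pi fun _ : Fin n => P) = (Measure.pi fun _ : Fin n => Q).withDensity G := by
    rw [key1]
    exact pi_withDensity Q fρ hfρm (by rw [← key1]; infer_instance)
  have hac : (Measure.pi fun _ : Fin n => P) ≪ (Measure.pi fun _ : Fin n => Q) := by
    rw [hpiP]
    exact MeasureTheory.withDensity_absolutelyContinuous _ _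
  -- the value of the density a.e.
  have hrn : (Measure.pi fun _ : Fin n => P).rnDeriv (Measure.pi fun _ : Fin n => Q)
      =ᵐ[Measure.pi fun _ : Fin n => Q] G := by
    rw [hpiP]
    exact Measure.rnDeriv_withDensity _ hGmeas
  have hrnP : (Measure.pi fun _ : Fin n => P).rnDeriv (Measure.pi fun _ : Fin n => Q)
      =ᵐ[Measure.pi fun _ : Fin n => P] G := hac.ae_eq hrn
  -- log fdel is integrable w.r.t. P
  have hmlogf : Measurable (fun t : Fin d → ℝ => Real.log (fdel L D d hd δ t)) :=
    Real.measurable_log.comp (measurable_fdel hd)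
  have hint1 : MeasureTheory.Integrable (fun t : Fin d → ℝ => Real.log (fdel L D d hd δ t)) P := by
    rw [hPdef, Pdel, MeasureTheory.integrable_withDensity_iff (measurable_fdel hd).ennreal_ofReal
      (MeasureTheory.ae_of_all _ fun x => ENNReal.ofReal_lt_top)]
    have he : (fun x : Fin d → ℝ => Real.log (fdel L D d hd δ x)
          * (ENNReal.ofReal (fdel L D d hd δ x)).toReal)
        = fun x => fdel L D d hd δ x * Real.log (fdel L D d hd δ x) := by
      funext x
      rw [ENNReal.toReal_ofReal (fdel_nonneg hd hL.le hD0 hLD x), mul_comm]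
    rw [he]
    have he2 : (fun x : Fin d → ℝ => fdel L D d hd δ x * Real.log (fdel L D d hd δ x))
        = (Set.Icc (0 : Fin d → ℝ) 1).indicator
            (fun x => Fdel L D δ (x ⟨0, hd⟩) * Real.log (Fdel L D δ (x ⟨0, hd⟩))) :=
      funext (fdel_mul_log_eq hd)
    rw [he2]
    exact integrable_indicator_box hd (fun t => Fdel L D δ t * Real.log (Fdel L D δ t))
      (measurable_Fdel.mul (Real.measurable_log.comp measurable_Fdel))
      ((1+L) * |Real.log (1+L)| + 1)
      (fun t => abs_mul_log_le (by linarith) (abs_Fdel_le hL.le hD0 t))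
  have hmap : ∀ i : Fin n, (Measure.pi fun _ : Fin n => P).map (Function.eval i) = P :=
    fun i => pi_map_eval P i
  -- the main value computation
  have hval : ∫ x, Real.log (((Measure.pi fun _ : Fin n => P).rnDeriv
        (Measure.pi fun _ : Fin n => Q)) x).toReal ∂(Measure.pi fun _ : Fin n => P)
      = (n:ℝ) * ((∑ j, if δ j then (1:ℝ) else 0) * ((1/(2*(D:ℝ)))
          * ((1 + L/D) * Real.log (1 + L/D) + (1 - L/D) * Real.log (1 - L/D)))) := by
    have step1 : ∫ x, Real.log (((Measure.pi fun _ : Fin n => P).rnDeriv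
          (Measure.pi fun _ : Fin n => Q)) x).toReal ∂(Measure.pi fun _ : Fin n => P)
        = ∫ x, Real.log ((G x).toReal) ∂(Measure.pi fun _ : Fin n => P) :=
      MeasureTheory.integral_congr_ae (hrnP.fun_comp (fun y => Real.log y.toReal))
    have hnull : (Measure.pi fun _ : Fin n => P)
        (⋃ i : Fin n, Function.eval i ⁻¹' {y | fdel L D d hd δ y = 0}) = 0 :=
      MeasureTheory.measure_iUnion_null fun i =>
        Measure.pi_eval_preimage_null _ (Pdel_null_of_fdel_zero hd)
    have step2 : ∫ x, Real.log ((G x).toReal) ∂(Measure.pi fun _ : Fin n => P)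
        = ∫ x, (∑ i : Fin n, Real.log (fdel L D d hd δ (x i)))
            ∂(Measure.pi fun _ : Fin n => P) := by
      refine MeasureTheory.integral_congr_ae ?_
      filter_upwards [MeasureTheory.measure_eq_zero_iff_ae_notMem.mp hnull] with x hx
      have hxi : ∀ i : Fin n, fdel L D d hd δ (x i) ≠ 0 := by
        intro i
        intro hzero
        exact hx (Set.mem_iUnion.2 ⟨i, by simpa using hzero⟩)
      have hGx : (G x).toReal = ∏ i : Fin n, fdel L D d hd δ (x i) := by
        rw [hG, ENNReal.toReal_prod]
        exact Finset.prod_congr rfl fun i _ =>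
          ENNReal.toReal_ofReal (fdel_nonneg hd hL.le hD0 hLD _)
      rw [hGx, Real.log_prod (fun i _ => hxi i)]
    have hIi : ∀ i : Fin n, MeasureTheory.Integrable
        (fun x : Fin n → Fin d → ℝ => Real.log (fdel L D d hd δ (x i)))
        (Measure.pi fun _ : Fin n => P) := by
      intro i
      have h1 := hint1
      rw [← hmap i] at h1
      have h2 := (MeasureTheory.integrable_map_measure hmlogf.aestronglyMeasurable
        (measurable_pi_apply i).aemeasurable).mp h1
      simpa [Function.comp_def] using h2
    have step3 : ∫ x, (∑ i : Fin n, Real.log (fdel L D d hd δ (x i)))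
          ∂(Measure.pi fun _ : Fin n => P)
        = ∑ i : Fin n, ∫ x, Real.log (fdel L D d hd δ (x i))
            ∂(Measure.pi fun _ : Fin n => P) :=
      MeasureTheory.integral_finset_sum _ (fun i _ => hIi i)
    have step4 : ∀ i : Fin n, ∫ x, Real.log (fdel L D d hd δ (x i))
          ∂(Measure.pi fun _ : Fin n => P) = ∫ t, Real.log (fdel L D d hd δ t) ∂P := by
      intro i
      conv_rhs => rw [← hmap i]
      rw [MeasureTheory.integral_map (measurable_pi_apply i).aemeasurable
        hmlogf.aestronglyMeasurable]
    have step5 : ∫ t, Real.log (fdel L D d hd δ t) ∂P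
        = ∫ t, fdel L D d hd δ t * Real.log (fdel L D d hd δ t) := by
      have hPd : P = volume.withDensity
          (fun x => ((fdel L D d hd δ x).toNNReal : ℝ≥0∞)) := by
        rw [hPdef, Pdel]; rfl
      rw [hPd, integral_withDensity_eq_integral_smul
        ((measurable_fdel hd).real_toNNReal)]
      congr 1
      funext x
      rw [NNReal.smul_def, Real.coe_toNNReal _ (fdel_nonneg hd hL.le hD0 hLD x), smul_eq_mul]
    rw [step1, step2, step3]
    rw [Finset.sum_congr rfl fun i _ => step4 i, Finset.sum_const, Finset.card_univ,
      Fintype.card_fin, nsmul_eq_mul, step5, integral_fdel_mul_log hd hL.le hD0]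
  -- put everything together
  have hKL : KLmeasure (Measure.pi fun _ : Fin n => P) (Measure.pi fun _ : Fin n => Q)
      = ENNReal.ofReal ((n:ℝ) * ((∑ j, if δ j then (1:ℝ) else 0) * ((1/(2*(D:ℝ)))
          * ((1 + L/D) * Real.log (1 + L/D) + (1 - L/D) * Real.log (1 - L/D))))) := by
    rw [KLmeasure, if_pos hac, hval]
  constructor
  · rw [hKL, interval_I hD0]
    congr 1
    ring
  · rw [hKL]
    apply ENNReal.ofReal_le_ofReal
    -- real inequality
    set a : ℝ := L / D with ha
    have ha0 : 0 < a := div_pos hL hD'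
    have ha1 : a ≤ 1 := by rw [ha, div_le_one hD']; exact hLD
    have h1 : Real.log (1+a) ≤ a := by
      have := Real.log_le_sub_one_of_pos (show (0:ℝ) < 1 + a by linarith)
      linarith
    have hphi1 : (1+a) * Real.log (1+a) ≤ (1+a) * a :=
      mul_le_mul_of_nonneg_left h1 (by linarith)
    have hphi2 : (1-a) * Real.log (1-a) ≤ -((1-a) * a) := by
      rcases eq_or_lt_of_le ha1 with heq | hlt
      · rw [← heq]
        simp
      · have h2 : Real.log (1-a) ≤ -a := by
          have := Real.log_le_sub_one_of_pos (show (0:ℝ) < 1 - a by linarith)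
          linarith
        nlinarith
    have hlow1 : a ≤ (1+a) * Real.log (1+a) := by
      have hpos : (0:ℝ) < (1+a)⁻¹ := inv_pos.2 (by linarith)
      have h3 := Real.log_le_sub_one_of_pos hpos
      rw [Real.log_inv] at h3
      have h4 : (1+a) * (1+a)⁻¹ = 1 := mul_inv_cancel₀ (by linarith)
      nlinarith
    have hlow2 : -a ≤ (1-a) * Real.log (1-a) := by
      rcases eq_or_lt_of_le ha1 with heq | hlt
      · rw [← heq]; simp; linarith
      · have hpos : (0:ℝ) < (1-a)⁻¹ := inv_pos.2 (by linarith)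
        have h3 := Real.log_le_sub_one_of_pos hpos
        rw [Real.log_inv] at h3
        have h4 : (1-a) * (1-a)⁻¹ = 1 := mul_inv_cancel₀ (by linarith)
        nlinarith
    set Iv : ℝ := (1/(2*(D:ℝ))) * ((1 + a) * Real.log (1 + a)
        + (1 - a) * Real.log (1 - a)) with hIv
    have hIv0 : 0 ≤ Iv := by
      rw [hIv]
      have : 0 ≤ (1 + a) * Real.log (1 + a) + (1 - a) * Real.log (1 - a) := by linarith
      positivity
    have hIvle : Iv ≤ a^2 / D := by
      rw [hIv]
      have hsum : (1 + a) * Real.log (1 + a) + (1 - a) * Real.log (1 - a) ≤ 2 * a^2 := by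
        nlinarith
      calc (1/(2*(D:ℝ))) * ((1 + a) * Real.log (1 + a) + (1 - a) * Real.log (1 - a))
          ≤ (1/(2*(D:ℝ))) * (2 * a^2) := by
            apply mul_le_mul_of_nonneg_left hsum (by positivity)
        _ = a^2 / D := by field_simp
      
    have hS0 : 0 ≤ ∑ j, if δ j then (1:ℝ) else 0 :=
      Finset.sum_nonneg fun j _ => by positivity
    have hSD : (∑ j, if δ j then (1:ℝ) else 0) ≤ (D:ℝ) := by
      calc (∑ j, if δ j then (1:ℝ) else 0) ≤ ∑ _j : Fin D, (1:ℝ) :=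
            Finset.sum_le_sum fun j _ => by by_cases h : δ j <;> simp [h]
        _ = (D:ℝ) := by simp
    have hfinal : (∑ j, if δ j then (1:ℝ) else 0) * Iv ≤ L^2 / (D:ℝ)^2 := by
      have h5 : (∑ j, if δ j then (1:ℝ) else 0) * Iv ≤ (D:ℝ) * Iv :=
        mul_le_mul_of_nonneg_right hSD hIv0
      have h6 : (D:ℝ) * Iv ≤ (D:ℝ) * (a^2/D) :=
        mul_le_mul_of_nonneg_left hIvle hD'.le
      have h7 : (D:ℝ) * (a^2/D) = a^2 := by field_simp
      have h8 : a^2 = L^2/(D:ℝ)^2 := by rw [ha]; rw [div_pow]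
      linarith
    have hn' : (0:ℝ) ≤ n := Nat.cast_nonneg n
    calc (n:ℝ) * ((∑ j, if δ j then (1:ℝ) else 0) * Iv)
        ≤ (n:ℝ) * (L^2/(D:ℝ)^2) := mul_le_mul_of_nonneg_left hfinal hn'
      _ = (n:ℝ) * L^2 / (D:ℝ)^2 := by ring


end
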